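/- arXiv:2511.09033 — 2 statements merged into one kernel-verified Lean document; each statement's English description precedes it below -/
import Mathlib

section
/- Let (γ₁,γ₂) ∈ {(1,ϖ), (1,ε^{−1}ϖ)} (the ramified cases). Then K = B^{op}·T_{γ₁,γ₂} ∪ B^{op}·w·T_{γ₁,γ₂}, where w = [[0,1],[1,0]], and the two double cosets B^{op}·T_{γ₁,γ₂} and B^{op}·w·T_{γ₁,γ₂} are disjoint. -/
open Matrix
open scoped Pointwise

noncomputable section

/-- Ambient data for the paper: `E` is the unramified quadratic extension `F(√ε)` of a
nonarchimedean local field `F` of odd residual characteristic.  The field `F` is realized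
as the fixed field of the nontrivial `F`-automorphism `σ` of `E`; `ν` is the discrete
valuation of `E` (extending the valuation of `F` normalized by `ν ϖ = 1` at a uniformizer
`ϖ` of `F`, and still surjecting onto `ℤ` since `E/F` is unramified); `q` is the (odd)
cardinality of the residue field of `F` (so `q²` is that of `E`); `ε ∈ O_F^×` is a
non-square unit and `sqε = √ε` generates `E` over `F`.  The standard facts about the
norm map and squares are included as fields. -/
structure Setting (E : Type*) [Field E] where
  /-- the nontrivial `F`-automorphism of `E`, written `x̄ = σ x` -/
  σ : E →+* E
  σσ : ∀ x, σ (σ x) = x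
  σ_ne_id : σ ≠ RingHom.id E
  /-- the valuation (only its values at nonzero elements matter) -/
  ν : E → ℤ
  ν_mul : ∀ {x y : E}, x ≠ 0 → y ≠ 0 → ν (x * y) = ν x + ν y
  ν_add : ∀ {x y : E}, x ≠ 0 → y ≠ 0 → x + y ≠ 0 → min (ν x) (ν y) ≤ ν (x + y)
  ν_σ : ∀ x, ν (σ x) = ν x
  ν_surj : ∀ n : ℤ, ∃ x : E, x ≠ 0 ∧ ν x = n
  /-- a uniformizer of `F` -/
  ϖ : E
  ϖ_ne_zero : ϖ ≠ 0
  ϖ_fixed : σ ϖ = ϖ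
  ν_ϖ : ν ϖ = 1
  /-- the residual cardinality of `F` -/
  q : ℕ
  q_odd : Odd q
  one_lt_q : 1 < q
  /-- a non-square unit of `O_F` -/
  ε : E
  ε_fixed : σ ε = ε
  ε_ne_zero : ε ≠ 0
  ν_ε : ν ε = 0
  ε_nonsquare : ¬ ∃ f : E, σ f = f ∧ f * f = ε
  /-- a square root `√ε ∈ E` of `ε` -/
  sqε : E
  sqε_sq : sqε * sqε = ε
  sqε_conj : σ sqε = -sqε
  /-- `E = F(√ε)` -/
  generates : ∀ x : E, ∃ a b : E, σ a = a ∧ σ b = b ∧ x = a + b * sqε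
  /-- the norm maps `O_E^×` onto `O_F^×` -/
  norm_surj_units : ∀ y : E, σ y = y → y ≠ 0 → ν y = 0 →
    ∃ x : E, x ≠ 0 ∧ ν x = 0 ∧ x * σ x = y
  /-- the norm maps `1 + p_E^d` onto `1 + p_F^d` for every `d ≥ 1` -/
  norm_surj_one_add : ∀ d : ℤ, 1 ≤ d → ∀ y : E, σ y = y → (y - 1 = 0 ∨ d ≤ ν (y - 1)) →
    ∃ x : E, (x - 1 = 0 ∨ d ≤ ν (x - 1)) ∧ x * σ x = y
  /-- the residue field of `F` has `q` elements -/
  residue_F : ∃ R : Finset E, R.card = q ∧ (∀ r ∈ R, σ r = r ∧ (r = 0 ∨ 0 ≤ ν r)) ∧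
    ∀ x : E, σ x = x → (x = 0 ∨ 0 ≤ ν x) →
      ∃! r, r ∈ R ∧ (x - r = 0 ∨ 1 ≤ ν (x - r))
  /-- the residue field of `E` has `q²` elements -/
  residue_E : ∃ R : Finset E, R.card = q ^ 2 ∧ (∀ r ∈ R, r = 0 ∨ 0 ≤ ν r) ∧
    ∀ x : E, (x = 0 ∨ 0 ≤ ν x) →
      ∃! r, r ∈ R ∧ (x - r = 0 ∨ 1 ≤ ν (x - r))
  /-- Hensel: a unit of `O_E` that is a square modulo `p_E` is a square (residue char. odd) -/
  hensel_sq : ∀ u w : E, u ≠ 0 → ν u = 0 → w ≠ 0 → ν w = 0 →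
    (w * w - u = 0 ∨ 1 ≤ ν (w * w - u)) → ∃ v : E, v * v = u

namespace Setting

variable {E : Type*} [Field E] (S : Setting E)

/-- `x` lies in the ring of integers `O_E`. -/
def inOE (x : E) : Prop := x = 0 ∨ 0 ≤ S.ν x

/-- `x` lies in the (fractional, if `d ≤ 0`) ideal `p_E^d`. -/
def inpE (d : ℤ) (x : E) : Prop := x = 0 ∨ d ≤ S.ν x

/-- `x` is a unit of `O_E`. -/
def unitOE (x : E) : Prop := x ≠ 0 ∧ S.ν x = 0

/-- `x` lies in the subfield `F` (the fixed field of `σ`). -/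
def inF (x : E) : Prop := S.σ x = x

/-- `x` is a unit of `O_F`. -/
def unitOF (x : E) : Prop := S.σ x = x ∧ x ≠ 0 ∧ S.ν x = 0

/-- `x` lies in `E¹`, i.e. has norm one. -/
def normOne (x : E) : Prop := x * S.σ x = 1

/-- `x ∈ √ε·F`. -/
def inSqεF (x : E) : Prop := ∃ f : E, S.σ f = f ∧ x = S.sqε * f

/-- Entrywise application of `σ` to a matrix, `ḡ`. -/
def mbar (g : Matrix (Fin 2) (Fin 2) E) : Matrix (Fin 2) (Fin 2) E :=
  Matrix.of fun i j => S.σ (g i j)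

/-- The antidiagonal matrix `w = [[0,1],[1,0]]` defining the hermitian form. -/
def wmat (_S : Setting E) : Matrix (Fin 2) (Fin 2) E := !![0, 1; 1, 0]

/-- Membership in `G = U(1,1)(F) = {g : ḡᵀ·w·g = w}`. -/
def inG (g : Matrix (Fin 2) (Fin 2) E) : Prop :=
  (S.mbar g)ᵀ * S.wmat * g = S.wmat

/-- `G = U(1,1)(F)`, as a set of 2×2 matrices over `E`. -/
def Gset : Set (Matrix (Fin 2) (Fin 2) E) := {g | S.inG g}

/-- `G_der = SU(1,1)(F) = {g ∈ G : det g = 1}`. -/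
def Gder : Set (Matrix (Fin 2) (Fin 2) E) := {g | S.inG g ∧ g.det = 1}

/-- The standard maximal compact subgroup `K` of `G` (entries in `O_E`). -/
def Kset : Set (Matrix (Fin 2) (Fin 2) E) := {g | S.inG g ∧ ∀ i j, S.inOE (g i j)}

/-- The congruence subgroup `K_d = {k ∈ K : k − 1 ∈ p_E^d·M₂(O_E)}`. -/
def Kfil (d : ℤ) : Set (Matrix (Fin 2) (Fin 2) E) :=
  {g | g ∈ S.Kset ∧ ∀ i j, S.inpE d ((g - 1) i j)}

/-- The subgroup `B` of upper triangular matrices in `K`. -/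
def Bset : Set (Matrix (Fin 2) (Fin 2) E) := {g | g ∈ S.Kset ∧ g 1 0 = 0}

/-- The subgroup `B^op` of lower triangular matrices in `K`. -/
def Bop : Set (Matrix (Fin 2) (Fin 2) E) := {g | g ∈ S.Kset ∧ g 0 1 = 0}

/-- The center `Z = {z·I : z ∈ E¹}` of `G`. -/
def Zset : Set (Matrix (Fin 2) (Fin 2) E) :=
  {g | ∃ z : E, S.normOne z ∧ g = z • (1 : Matrix (Fin 2) (Fin 2) E)}

/-- The matrix `α^t = diag(ϖ^{−t}, ϖ^t)`. -/
def αmat (t : ℕ) : Matrix (Fin 2) (Fin 2) E := !![(S.ϖ ^ t)⁻¹, 0; 0, S.ϖ ^ t]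

/-- The matrix `η = diag(1, ϖ)` (it normalizes `G`). -/
def ηmat : Matrix (Fin 2) (Fin 2) E := !![1, 0; 0, S.ϖ]

/-- The matrix `η⁻¹ = diag(1, ϖ⁻¹)`. -/
def ηinv : Matrix (Fin 2) (Fin 2) E := !![1, 0; 0, S.ϖ⁻¹]

/-- The torus `T_{γ₁,γ₂} = {[[a,bγ₁],[bγ₂,a]] : a·ā + b·b̄·γ₁γ₂ = 1, ā·b ∈ √ε·F}`. -/
def Tset (γ₁ γ₂ : E) : Set (Matrix (Fin 2) (Fin 2) E) :=
  {g | ∃ a b : E, g = !![a, b * γ₁; b * γ₂, a] ∧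
    a * S.σ a + b * S.σ b * (γ₁ * γ₂) = 1 ∧ S.inSqεF (S.σ a * b)}

/-- The Moy–Prasad filtration subgroup `G_{y,r}` of `G` (for `r > 0`). -/
def Gfil (y r : ℚ) : Set (Matrix (Fin 2) (Fin 2) E) :=
  {g | S.inG g ∧ S.inpE ⌈r⌉ (g 0 0 - 1) ∧ S.inpE ⌈r⌉ (g 1 1 - 1) ∧
    S.inpE ⌈r - y⌉ (g 0 1) ∧ S.inpE ⌈r + y⌉ (g 1 0)}

/-- `G_{y,0+} = ⋃_{r>0} G_{y,r}`. -/
def Gfil0plus (y : ℚ) : Set (Matrix (Fin 2) (Fin 2) E) :=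
  {g | ∃ r : ℚ, 0 < r ∧ g ∈ S.Gfil y r}

end Setting

/-!
Right multiplication by `t ∈ T` acts on the top row `(A, B)` of `k ∈ K` through
`t⁻¹ = t̄ = !![ā, b̄; b̄ γ, ā]`, sending it to `(A ā + B b̄ γ, A b̄ + B ā)`. Unitarity gives
`A B̄ + B Ā = 0`, and one of `A`, `B` is a unit. If `A` is a unit, taking `b / a = B / A` kills the
second entry, so `k t⁻¹ ∈ B^op`; otherwise `A ∈ p_E`, and `b / a = A / (B γ)` (integral since
`ν γ = 1`) kills the first entry, so `k t⁻¹ w ∈ B^op`. In both cases the required `a` exists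
because the norm maps `1 + p_E` onto `1 + p_F`. The two cosets are disjoint because the
upper-left entry is a unit on `B^op T`, while on `B^op w T` it is a multiple of `b γ ∈ p_E`.
-/

namespace Setting

variable {E : Type*} [Field E] (S : Setting E)

section Valuation

lemma ν_one : S.ν 1 = 0 := by
  have h := S.ν_mul (x := (1 : E)) (y := 1) one_ne_zero one_ne_zero
  rw [mul_one] at h
  omega

lemma ν_neg (x : E) : S.ν (-x) = S.ν x := by
  have h1 := S.ν_mul (x := (-1 : E)) (y := -1) (by norm_num) (by norm_num)
  rw [neg_one_mul, neg_neg, ν_one] at h1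
  rcases eq_or_ne x 0 with rfl | hx
  · rw [neg_zero]
  · have h2 := S.ν_mul (x := (-1 : E)) (by norm_num) hx
    rw [neg_one_mul] at h2
    omega

lemma ν_inv {x : E} (hx : x ≠ 0) : S.ν x⁻¹ = -S.ν x := by
  have h := S.ν_mul hx (inv_ne_zero hx)
  rw [mul_inv_cancel₀ hx, ν_one] at h
  omega

lemma ν_div {x y : E} (hx : x ≠ 0) (hy : y ≠ 0) : S.ν (x / y) = S.ν x - S.ν y := by
  rw [div_eq_mul_inv, S.ν_mul hx (inv_ne_zero hy), S.ν_inv hy, sub_eq_add_neg]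

lemma σ_ne_zero {x : E} (hx : x ≠ 0) : S.σ x ≠ 0 :=
  (map_ne_zero S.σ).2 hx

lemma ν_mul_σ_self {x : E} (hx : x ≠ 0) : S.ν (x * S.σ x) = 2 * S.ν x := by
  rw [S.ν_mul hx (S.σ_ne_zero hx), ν_σ, two_mul]

lemma ν_add_eq_min {x y : E} (hx : x ≠ 0) (hy : y ≠ 0) (hxy : S.ν x ≠ S.ν y) :
    x + y ≠ 0 ∧ S.ν (x + y) = min (S.ν x) (S.ν y) := by
  have hsum : x + y ≠ 0 := fun h => hxy (by rw [eq_neg_of_add_eq_zero_right h, ν_neg])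
  have h1 := S.ν_add hx hy hsum
  have h2 := S.ν_add hsum (neg_ne_zero.2 hy) (by simpa using hx)
  have h3 := S.ν_add hsum (neg_ne_zero.2 hx) (by simpa using hy)
  rw [add_neg_cancel_right, ν_neg] at h2
  rw [add_neg_cancel_comm, ν_neg] at h3
  exact ⟨hsum, by omega⟩

lemma inpE_zero (d : ℤ) : S.inpE d 0 := Or.inl rfl

lemma inpE_mul {m n : ℤ} {x y : E} (hx : S.inpE m x) (hy : S.inpE n y) :
    S.inpE (m + n) (x * y) := by
  rcases eq_or_ne x 0 with rfl | hx0
  · simpa using S.inpE_zero _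
  rcases eq_or_ne y 0 with rfl | hy0
  · simpa using S.inpE_zero _
  have := hx.resolve_left hx0
  have := hy.resolve_left hy0
  exact Or.inr (by rw [S.ν_mul hx0 hy0]; omega)

lemma inOE_mul {x y : E} (hx : S.inOE x) (hy : S.inOE y) : S.inOE (x * y) :=
  S.inpE_mul hx hy

lemma inpE_add {d : ℤ} {x y : E} (hx : S.inpE d x) (hy : S.inpE d y) :
    S.inpE d (x + y) := by
  rcases eq_or_ne x 0 with rfl | hx0
  · rwa [zero_add]
  rcases eq_or_ne y 0 with rfl | hy0
  · rwa [add_zero]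
  rcases eq_or_ne (x + y) 0 with hxy | hxy
  · exact Or.inl hxy
  · exact Or.inr (le_trans (le_min (hx.resolve_left hx0) (hy.resolve_left hy0))
      (S.ν_add hx0 hy0 hxy))

lemma inpE_σ {d : ℤ} {x : E} (hx : S.inpE d x) : S.inpE d (S.σ x) := by
  rcases hx with rfl | hx
  · exact Or.inl (map_zero _)
  · exact Or.inr (by rwa [ν_σ])

lemma not_inpE_one_of_unitOE {x : E} (hx : S.unitOE x) : ¬ S.inpE 1 x := by
  rintro (h | h)
  · exact hx.1 h
  · rw [hx.2] at h
    omega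

lemma inpE_one_of_not_unitOE {x : E} (hx : S.inOE x) (hu : ¬ S.unitOE x) : S.inpE 1 x := by
  rcases eq_or_ne x 0 with rfl | hx0
  · exact S.inpE_zero 1
  · have h0 : 0 ≤ S.ν x := hx.resolve_left hx0
    have h1 : S.ν x ≠ 0 := fun h => hu ⟨hx0, h⟩
    exact Or.inr (by omega)

lemma unitOE_one : S.unitOE 1 := ⟨one_ne_zero, S.ν_one⟩

lemma unitOE_mul {x y : E} (hx : S.unitOE x) (hy : S.unitOE y) : S.unitOE (x * y) :=
  ⟨mul_ne_zero hx.1 hy.1, by rw [S.ν_mul hx.1 hy.1, hx.2, hy.2, add_zero]⟩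

lemma exists_norm_mul_one_add_eq_one {z : E} (hzF : S.σ z = z) (hz : S.inpE 1 z) :
    ∃ a : E, a * S.σ a * (1 + z) = 1 := by
  rcases eq_or_ne z 0 with rfl | hz0
  · exact ⟨1, by simp⟩
  have hνz : 1 ≤ S.ν z := hz.resolve_left hz0
  obtain ⟨hy0, hνy⟩ := S.ν_add_eq_min one_ne_zero hz0 (by rw [ν_one]; omega)
  rw [ν_one, min_eq_left (by omega)] at hνy
  have hyF : S.σ (1 + z)⁻¹ = (1 + z)⁻¹ := by rw [map_inv₀, map_add, map_one, hzF]
  have hy1 : (1 + z)⁻¹ - 1 = -z * (1 + z)⁻¹ := by field_simp; ring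
  have hνy1 : S.inpE 1 ((1 + z)⁻¹ - 1) := by
    refine Or.inr ?_
    rw [hy1, S.ν_mul (neg_ne_zero.2 hz0) (inv_ne_zero hy0), ν_neg, S.ν_inv hy0, hνy]
    omega
  obtain ⟨a, -, ha⟩ := S.norm_surj_one_add 1 le_rfl _ hyF hνy1
  exact ⟨a, by rw [ha, inv_mul_cancel₀ hy0]⟩

lemma inSqεF_iff {x : E} : S.inSqεF x ↔ S.σ x = -x := by
  have hsqε : S.sqε ≠ 0 := by
    rintro h
    exact S.ε_ne_zero (by rw [← S.sqε_sq, h, mul_zero])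
  constructor
  · rintro ⟨f, hf, rfl⟩
    rw [map_mul, sqε_conj, hf, neg_mul]
  · refine fun h => ⟨S.sqε⁻¹ * x, ?_, by field_simp⟩
    rw [map_mul, map_inv₀, sqε_conj, h]
    field_simp

end Valuation

section Unitary

variable {S}

lemma inG_mul {g h : Matrix (Fin 2) (Fin 2) E} (hg : S.inG g) (hh : S.inG h) :
    S.inG (g * h) := by
  have hbar : S.mbar (g * h) = S.mbar g * S.mbar h := by
    ext i j
    simp [mbar, Matrix.mul_apply, Fin.sum_univ_two]
  unfold inG at *
  calc (S.mbar (g * h))ᵀ * S.wmat * (g * h)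
      = (S.mbar h)ᵀ * ((S.mbar g)ᵀ * S.wmat * g) * h := by
        simp only [hbar, Matrix.transpose_mul, Matrix.mul_assoc]
    _ = S.wmat := by rw [hg, hh]

lemma Kset_mul {g h : Matrix (Fin 2) (Fin 2) E} (hg : g ∈ S.Kset) (hh : h ∈ S.Kset) :
    g * h ∈ S.Kset := by
  refine ⟨inG_mul hg.1 hh.1, fun i j => ?_⟩
  rw [Matrix.mul_apply, Fin.sum_univ_two]
  exact S.inpE_add (S.inpE_mul (hg.2 i 0) (hh.2 0 j)) (S.inpE_mul (hg.2 i 1) (hh.2 1 j))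

lemma Kset_mul_subset : S.Kset * S.Kset ⊆ S.Kset := by
  rintro _ ⟨g, hg, h, hh, rfl⟩
  exact Kset_mul hg hh

lemma wmat_mul_wmat : S.wmat * S.wmat = 1 := by
  simp [wmat, Matrix.one_fin_two]

lemma wmat_mem_Kset : S.wmat ∈ S.Kset := by
  refine ⟨?_, fun i j => ?_⟩
  · have : (S.mbar S.wmat)ᵀ = S.wmat := by
      ext i j; fin_cases i <;> fin_cases j <;> simp [mbar, wmat]
    rw [inG, this, wmat_mul_wmat, Matrix.one_mul]
  · fin_cases i <;> fin_cases j <;> simp [wmat, inOE, ν_one]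

/-- The rows of `g ∈ G` satisfy the relations coming from `g⁻¹ = w ḡᵀ w`. -/
lemma row_relations_of_inG {g : Matrix (Fin 2) (Fin 2) E} (hg : S.inG g) :
    g 0 0 * S.σ (g 1 1) + g 0 1 * S.σ (g 1 0) = 1 ∧
    g 0 0 * S.σ (g 0 1) + g 0 1 * S.σ (g 0 0) = 0 := by
  have hinv : g * (S.wmat * (S.mbar g)ᵀ * S.wmat) = 1 := by
    refine mul_eq_one_comm.mp ?_
    rw [Matrix.mul_assoc, Matrix.mul_assoc, ← Matrix.mul_assoc _ S.wmat g, hg, wmat_mul_wmat]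
  have e00 := congrFun (congrFun hinv 0) 0
  have e01 := congrFun (congrFun hinv 0) 1
  simp only [Matrix.mul_apply, Fin.sum_univ_two, wmat, mbar] at e00 e01
  simp only [of_apply, cons_val', cons_val_zero, cons_val_one, cons_val_fin_one, Fin.isValue,
    transpose_apply, one_apply_eq, one_apply_ne, ne_eq, zero_ne_one, not_false_eq_true, zero_mul,
    one_mul, mul_zero, mul_one, zero_add, add_zero] at e00 e01
  exact ⟨by linear_combination e00, by linear_combination e01⟩

lemma unitOE_or_of_mem_Kset {k : Matrix (Fin 2) (Fin 2) E} (hk : k ∈ S.Kset) :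
    S.unitOE (k 0 0) ∨ (S.inpE 1 (k 0 0) ∧ S.unitOE (k 0 1)) := by
  by_cases hA : S.unitOE (k 0 0)
  · exact Or.inl hA
  have hA1 := S.inpE_one_of_not_unitOE (hk.2 0 0) hA
  refine Or.inr ⟨hA1, by_contra fun hB => ?_⟩
  have hB1 := S.inpE_one_of_not_unitOE (hk.2 0 1) hB
  have hsum := S.inpE_add (S.inpE_mul hA1 (S.inpE_σ (hk.2 1 1)))
    (S.inpE_mul hB1 (S.inpE_σ (hk.2 1 0)))
  rw [add_zero, (row_relations_of_inG hk.1).1] at hsum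
  exact S.not_inpE_one_of_unitOE S.unitOE_one hsum

lemma unitOE_of_mem_Bop {p : Matrix (Fin 2) (Fin 2) E} (hp : p ∈ S.Bop) :
    S.unitOE (p 0 0) :=
  (unitOE_or_of_mem_Kset hp.1).resolve_right fun h => h.2.1 hp.2

end Unitary

section Torus

variable {S} {γ : E}

lemma unitOE_and_inOE_of_norm_eq_one (hγ0 : γ ≠ 0) (hγν : S.ν γ = 1) {a b : E}
    (h : a * S.σ a + b * S.σ b * γ = 1) : S.unitOE a ∧ S.inOE b := by
  rcases eq_or_ne b 0 with rfl | hb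
  · rw [zero_mul, zero_mul, add_zero] at h
    have ha : a ≠ 0 := by rintro rfl; simp at h
    have hν := S.ν_mul_σ_self ha
    rw [h, ν_one] at hν
    exact ⟨⟨ha, by omega⟩, S.inpE_zero 0⟩
  have hb' : b * S.σ b * γ ≠ 0 := mul_ne_zero (mul_ne_zero hb (S.σ_ne_zero hb)) hγ0
  have hνb : S.ν (b * S.σ b * γ) = 2 * S.ν b + 1 := by
    rw [S.ν_mul (mul_ne_zero hb (S.σ_ne_zero hb)) hγ0, S.ν_mul_σ_self hb, hγν]
  rcases eq_or_ne a 0 with rfl | ha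
  · rw [zero_mul, zero_add] at h
    rw [h, ν_one] at hνb
    omega
  have hmin := (S.ν_add_eq_min (mul_ne_zero ha (S.σ_ne_zero ha)) hb'
    (by rw [S.ν_mul_σ_self ha, hνb]; omega)).2
  rw [h, ν_one, S.ν_mul_σ_self ha, hνb] at hmin
  exact ⟨⟨ha, by omega⟩, Or.inr (by omega)⟩

lemma Tset_subset_Kset (hγF : S.σ γ = γ) (hγ0 : γ ≠ 0) (hγν : S.ν γ = 1) :
    S.Tset 1 γ ⊆ S.Kset := by
  rintro _ ⟨a, b, rfl, hnorm, hskew⟩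
  rw [one_mul] at hnorm
  rw [inSqεF_iff, map_mul, σσ] at hskew
  obtain ⟨ha, hb⟩ := unitOE_and_inOE_of_norm_eq_one hγ0 hγν hnorm
  refine ⟨?_, fun i j => ?_⟩
  · unfold inG
    ext i j
    fin_cases i <;> fin_cases j <;>
      simp only [mbar, wmat, Matrix.mul_apply, Fin.sum_univ_two, transpose_apply, map_mul, hγF,
        of_apply, cons_val', cons_val_zero, cons_val_one, cons_val_fin_one, Fin.zero_eta,
        Fin.mk_one, Fin.isValue, mul_one, mul_zero, zero_add, add_zero]
    · linear_combination γ * hskew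
    · linear_combination hnorm
    · linear_combination hnorm
    · linear_combination hskew
  · have hγO : S.inOE γ := Or.inr (by omega)
    fin_cases i <;> fin_cases j <;>
      simp only [of_apply, cons_val', cons_val_zero, cons_val_one, cons_val_fin_one, Fin.zero_eta,
        Fin.mk_one, Fin.isValue, mul_one]
    · exact Or.inr ha.2.ge
    · exact hb
    · exact S.inOE_mul hb hγO
    · exact Or.inr ha.2.ge

lemma mbar_torus (hγF : S.σ γ = γ) {a b : E} :
    S.mbar !![a, b * 1; b * γ, a] = !![S.σ a, S.σ b * 1; S.σ b * γ, S.σ a] := by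
  ext i j
  fin_cases i <;> fin_cases j <;> simp [mbar, hγF]

lemma mbar_mem_Tset (hγF : S.σ γ = γ) {t : Matrix (Fin 2) (Fin 2) E} (ht : t ∈ S.Tset 1 γ) :
    S.mbar t ∈ S.Tset 1 γ := by
  obtain ⟨a, b, rfl, hnorm, hskew⟩ := ht
  refine ⟨S.σ a, S.σ b, mbar_torus hγF, ?_, ?_⟩
  · rw [σσ, σσ]
    linear_combination hnorm
  · rw [inSqεF_iff, map_mul, σσ] at hskew
    rw [inSqεF_iff, σσ, map_mul, σσ]
    linear_combination hskew

lemma mbar_mul_of_mem_Tset (hγF : S.σ γ = γ) {t : Matrix (Fin 2) (Fin 2) E}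
    (ht : t ∈ S.Tset 1 γ) : S.mbar t * t = 1 := by
  obtain ⟨a, b, rfl, hnorm, hskew⟩ := ht
  rw [one_mul] at hnorm
  rw [inSqεF_iff, map_mul, σσ] at hskew
  rw [mbar_torus hγF]
  ext i j
  fin_cases i <;> fin_cases j <;>
    simp only [Matrix.mul_apply, Fin.sum_univ_two, one_apply_eq, one_apply_ne, ne_eq, zero_ne_one,
      one_ne_zero, not_false_eq_true, of_apply, cons_val', cons_val_zero, cons_val_one,
      cons_val_fin_one, Fin.zero_eta, Fin.mk_one, Fin.isValue, mul_one]
  · linear_combination hnorm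
  · linear_combination hskew
  · linear_combination γ * hskew
  · linear_combination hnorm

/-- The witness is `b = r a` with `r = Y / X`, where `a ā = (1 + r r̄ γ)⁻¹` is a norm because
`1 + r r̄ γ ∈ 1 + p_F`. -/
lemma exists_mem_Tset_of_skew (hγF : S.σ γ = γ) (hγν : S.ν γ = 1) {X Y : E} (hX : X ≠ 0)
    (hY : S.inpE (S.ν X) Y) (hXY : X * S.σ Y + Y * S.σ X = 0) :
    ∃ a b : E, !![a, b * 1; b * γ, a] ∈ S.Tset 1 γ ∧ X * S.σ b + Y * S.σ a = 0 := by
  set r := Y / X with hr_def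
  have hσX := S.σ_ne_zero hX
  have hσr : S.σ r = -r := by
    rw [hr_def, map_div₀]
    field_simp
    linear_combination hXY
  have hr : S.inOE r := by
    rcases eq_or_ne Y 0 with hY0 | hY0
    · exact Or.inl (by rw [hr_def, hY0, zero_div])
    · exact Or.inr (by rw [hr_def, S.ν_div hY0 hX]; have := hY.resolve_left hY0; omega)
  have hz : S.inpE 1 (r * S.σ r * γ) := by
    simpa using S.inpE_mul (S.inOE_mul hr (S.inpE_σ hr)) (Or.inr hγν.ge : S.inpE 1 γ)
  obtain ⟨a, ha⟩ := S.exists_norm_mul_one_add_eq_one (by rw [map_mul, map_mul, σσ, hγF]; ring) hz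
  rw [hσr] at ha
  refine ⟨a, r * a, ⟨a, r * a, rfl, ?_, ?_⟩, ?_⟩
  · rw [map_mul, hσr]
    linear_combination ha
  · rw [inSqεF_iff, map_mul, map_mul, σσ, hσr]
    ring
  · rw [map_mul, hσr, hr_def]
    field_simp
    ring

end Torus

section DoubleCosets

variable {S} {γ : E}

lemma mem_Bop_mul_Tset_of_apply_zero_one (hγF : S.σ γ = γ) (hγ0 : γ ≠ 0) (hγν : S.ν γ = 1)
    {k t : Matrix (Fin 2) (Fin 2) E} (hk : k ∈ S.Kset) (ht : t ∈ S.Tset 1 γ)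
    (h : (k * S.mbar t) 0 1 = 0) : k ∈ S.Bop * S.Tset 1 γ :=
  ⟨k * S.mbar t, ⟨Kset_mul hk (Tset_subset_Kset hγF hγ0 hγν (mbar_mem_Tset hγF ht)), h⟩, t, ht,
    show k * S.mbar t * t = k by
      rw [Matrix.mul_assoc, mbar_mul_of_mem_Tset hγF ht, Matrix.mul_one]⟩

lemma mem_Bop_wmat_mul_Tset_of_apply_zero_zero (hγF : S.σ γ = γ) (hγ0 : γ ≠ 0)
    (hγν : S.ν γ = 1) {k t : Matrix (Fin 2) (Fin 2) E} (hk : k ∈ S.Kset)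
    (ht : t ∈ S.Tset 1 γ) (h : (k * S.mbar t) 0 0 = 0) :
    k ∈ S.Bop * {S.wmat} * S.Tset 1 γ := by
  have hK : k * S.mbar t * S.wmat ∈ S.Kset :=
    Kset_mul (Kset_mul hk (Tset_subset_Kset hγF hγ0 hγν (mbar_mem_Tset hγF ht))) wmat_mem_Kset
  have h01 : (k * S.mbar t * S.wmat) 0 1 = 0 := by
    simpa [Matrix.mul_apply, Fin.sum_univ_two, wmat] using h
  refine ⟨_, ⟨_, ⟨hK, h01⟩, S.wmat, rfl, rfl⟩, t, ht, ?_⟩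
  show k * S.mbar t * S.wmat * S.wmat * t = k
  rw [Matrix.mul_assoc (k * S.mbar t) S.wmat S.wmat, wmat_mul_wmat, Matrix.mul_one,
    Matrix.mul_assoc, mbar_mul_of_mem_Tset hγF ht, Matrix.mul_one]

lemma Kset_subset_union (hγF : S.σ γ = γ) (hγ0 : γ ≠ 0) (hγν : S.ν γ = 1) :
    S.Kset ⊆ S.Bop * S.Tset 1 γ ∪ S.Bop * {S.wmat} * S.Tset 1 γ := by
  intro k hk
  have hskew := (row_relations_of_inG hk.1).2
  rcases unitOE_or_of_mem_Kset hk with hA | ⟨hA, hB⟩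
  · obtain ⟨a, b, ht, hab⟩ := exists_mem_Tset_of_skew hγF hγν hA.1
      (by rw [hA.2]; exact hk.2 0 1) hskew
    refine Or.inl (mem_Bop_mul_Tset_of_apply_zero_one hγF hγ0 hγν hk ht ?_)
    simp only [Matrix.mul_apply, Fin.sum_univ_two, mbar, of_apply, cons_val', cons_val_zero,
      cons_val_one, cons_val_fin_one, Fin.isValue, mul_one]
    linear_combination hab
  · obtain ⟨a, b, ht, hab⟩ := exists_mem_Tset_of_skew hγF hγν (mul_ne_zero hB.1 hγ0)
      (by rw [S.ν_mul hB.1 hγ0, hB.2, hγν, zero_add]; exact hA)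
      (by rw [map_mul, hγF]; linear_combination γ * hskew)
    refine Or.inr (mem_Bop_wmat_mul_Tset_of_apply_zero_zero hγF hγ0 hγν hk ht ?_)
    simp only [Matrix.mul_apply, Fin.sum_univ_two, mbar, map_mul, hγF, of_apply, cons_val',
      cons_val_zero, cons_val_one, cons_val_fin_one, Fin.isValue, mul_one]
    linear_combination hab

lemma union_subset_Kset (hγF : S.σ γ = γ) (hγ0 : γ ≠ 0) (hγν : S.ν γ = 1) :
    S.Bop * S.Tset 1 γ ∪ S.Bop * {S.wmat} * S.Tset 1 γ ⊆ S.Kset := by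
  have hB : S.Bop ⊆ S.Kset := fun _ hp => hp.1
  have hT := Tset_subset_Kset hγF hγ0 hγν
  have hw : {S.wmat} ⊆ S.Kset := Set.singleton_subset_iff.2 wmat_mem_Kset
  refine Set.union_subset ((Set.mul_subset_mul hB hT).trans Kset_mul_subset) ?_
  exact (Set.mul_subset_mul ((Set.mul_subset_mul hB hw).trans Kset_mul_subset)
    hT).trans Kset_mul_subset

lemma disjoint_Bop_mul_Tset (hγ0 : γ ≠ 0) (hγν : S.ν γ = 1) :
    Disjoint (S.Bop * S.Tset 1 γ) (S.Bop * {S.wmat} * S.Tset 1 γ) := by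
  rw [Set.disjoint_left]
  rintro _ ⟨p, hp, _, ⟨a, b, rfl, hnorm, -⟩, rfl⟩
    ⟨_, ⟨p', hp', _, rfl, rfl⟩, _, ⟨a', b', rfl, hnorm', -⟩, heq⟩
  change p' * S.wmat * _ = p * _ at heq
  rw [one_mul] at hnorm hnorm'
  have hunit : S.unitOE ((p * !![a, b * 1; b * γ, a]) 0 0) := by
    simpa [Matrix.mul_apply, Fin.sum_univ_two, hp.2] using
      S.unitOE_mul (unitOE_of_mem_Bop hp) (unitOE_and_inOE_of_norm_eq_one hγ0 hγν hnorm).1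
  have hmax : S.inpE 1 ((p' * S.wmat * !![a', b' * 1; b' * γ, a']) 0 0) := by
    simpa [Matrix.mul_apply, Fin.sum_univ_two, hp'.2, wmat, mul_assoc] using
      S.inpE_mul (S.inOE_mul (hp'.1.2 0 0) (unitOE_and_inOE_of_norm_eq_one hγ0 hγν hnorm').2)
        (Or.inr hγν.ge : S.inpE 1 γ)
  exact S.not_inpE_one_of_unitOE hunit (by rwa [heq] at hmax)

end DoubleCosets

lemma ramified_pair_spec {γ₁ γ₂ : E}
    (h : (γ₁, γ₂) = ((1 : E), S.ϖ) ∨ (γ₁, γ₂) = ((1 : E), S.ε⁻¹ * S.ϖ)) :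
    γ₁ = 1 ∧ S.σ γ₂ = γ₂ ∧ γ₂ ≠ 0 ∧ S.ν γ₂ = 1 := by
  rcases h with h | h <;> obtain ⟨rfl, rfl⟩ := Prod.ext_iff.1 h
  · exact ⟨rfl, S.ϖ_fixed, S.ϖ_ne_zero, S.ν_ϖ⟩
  · refine ⟨rfl, by rw [map_mul, map_inv₀, ε_fixed, ϖ_fixed],
      mul_ne_zero (inv_ne_zero S.ε_ne_zero) S.ϖ_ne_zero, ?_⟩
    rw [S.ν_mul (inv_ne_zero S.ε_ne_zero) S.ϖ_ne_zero, S.ν_inv S.ε_ne_zero, ν_ε, ν_ϖ]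
    rfl

end Setting

/-- For `(γ₁,γ₂) ∈ {(1,ϖ), (1,ε⁻¹ϖ)}` (the ramified cases),
`K = B^op·T_{γ₁,γ₂} ∪ B^op·w·T_{γ₁,γ₂}`, and the two double cosets are disjoint. -/
theorem statement13 {E : Type*} [Field E] (S : Setting E) (γ₁ γ₂ : E)
    (hpair : (γ₁, γ₂) = ((1 : E), S.ϖ) ∨ (γ₁, γ₂) = ((1 : E), S.ε⁻¹ * S.ϖ)) :
    S.Kset = (S.Bop * S.Tset γ₁ γ₂) ∪ (S.Bop * {S.wmat} * S.Tset γ₁ γ₂) ∧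
    Disjoint (S.Bop * S.Tset γ₁ γ₂) (S.Bop * {S.wmat} * S.Tset γ₁ γ₂) := by
  obtain ⟨rfl, hγF, hγ0, hγν⟩ := S.ramified_pair_spec hpair
  exact ⟨(S.Kset_subset_union hγF hγ0 hγν).antisymm (S.union_subset_Kset hγF hγ0 hγν),
    S.disjoint_Bop_mul_Tset hγ0 hγν⟩
end
end

section
/- Let d > 0 be an integer, let V be a nonzero complex vector space, and let σ : K → GL(V) be a group homomorphism with K₁ ⊆ ker σ. Define σ^{η^d} on the subgroup B·K_d = K ∩ η^dKη^{−d} by σ^{η^d}(a) := σ(η^{−d}·a·η^{d}) (well defined, since η^{−d}(B·K_d)η^{d} ⊆ K). Then: (i) K_{d+1} ⊆ ker(σ^{η^d}); and (ii) if there exists c ∈ √ε·O_F^× with σ([[1,0],[c,1]]) ≠ id, then K_d ⊄ ker(σ^{η^d}). -/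
open Matrix
open scoped Pointwise

noncomputable section

/-! Conjugation by `η^{-d}` fixes the diagonal entries of a matrix, multiplies the
upper-right entry by `ϖ^d` and the lower-left one by `ϖ^{-d}`. Hence it maps `K_{d+1}`
into `K_1 ⊆ ker ρ`, and it maps `[[1,0],[cϖ^d,1]] ∈ K_d` to `[[1,0],[c,1]]`. -/

namespace Setting

variable {E : Type*} [Field E] (S : Setting E)

lemma ν_ϖ_pow (n : ℕ) : S.ν (S.ϖ ^ n) = n := by
  induction n with
  | zero => simpa using S.ν_one
  | succ m ih =>
    rw [pow_succ, S.ν_mul (pow_ne_zero _ S.ϖ_ne_zero) S.ϖ_ne_zero, ih, S.ν_ϖ]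
    push_cast
    ring

lemma σ_ϖ_pow (n : ℕ) : S.σ (S.ϖ ^ n) = S.ϖ ^ n := by
  rw [map_pow, S.ϖ_fixed]

lemma sqε_ne_zero : S.sqε ≠ 0 := by
  intro h
  exact S.ε_ne_zero (by rw [← S.sqε_sq, h, mul_zero])

lemma ν_sqε : S.ν S.sqε = 0 := by
  have h := S.ν_mul S.sqε_ne_zero S.sqε_ne_zero
  rw [S.sqε_sq, S.ν_ε] at h
  omega

lemma inpE_mono {x : E} {m n : ℤ} (hmn : m ≤ n) (h : S.inpE n x) : S.inpE m x :=
  h.imp_right hmn.trans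

lemma inOE_of_inpE {x : E} {n : ℤ} (hn : 0 ≤ n) (h : S.inpE n x) : S.inOE x :=
  S.inpE_mono hn h

lemma inpE_mul_ϖ_pow {x : E} {m : ℤ} (n : ℕ) (h : S.inpE m x) :
    S.inpE (m + n) (x * S.ϖ ^ n) := by
  rcases eq_or_ne x 0 with rfl | hx
  · exact Or.inl (zero_mul _)
  · refine Or.inr ?_
    rw [S.ν_mul hx (pow_ne_zero _ S.ϖ_ne_zero), S.ν_ϖ_pow]
    have := h.resolve_left hx
    omega

lemma inpE_mul_inv_ϖ_pow {x : E} {m : ℤ} (n : ℕ) (h : S.inpE m x) :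
    S.inpE (m - n) (x * (S.ϖ ^ n)⁻¹) := by
  rcases eq_or_ne x 0 with rfl | hx
  · exact Or.inl (zero_mul _)
  · have hp := pow_ne_zero n S.ϖ_ne_zero
    refine Or.inr ?_
    rw [S.ν_mul hx (inv_ne_zero hp), S.ν_inv hp, S.ν_ϖ_pow]
    have := h.resolve_left hx
    omega

lemma ηmat_pow (n : ℕ) : S.ηmat ^ n = !![1, 0; 0, S.ϖ ^ n] := by
  induction n with
  | zero => simp [Matrix.one_fin_two]
  | succ m ih =>
    rw [pow_succ, ih, ηmat, Matrix.mul_fin_two, pow_succ]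
    simp

lemma ηinv_pow (n : ℕ) : S.ηinv ^ n = !![1, 0; 0, (S.ϖ ^ n)⁻¹] := by
  induction n with
  | zero => simp [Matrix.one_fin_two]
  | succ m ih =>
    rw [pow_succ, ih, ηinv, Matrix.mul_fin_two, pow_succ, mul_inv]
    simp

lemma ηinv_pow_mul_mul_ηmat_pow (n : ℕ) (a : Matrix (Fin 2) (Fin 2) E) :
    S.ηinv ^ n * a * S.ηmat ^ n =
      !![a 0 0, a 0 1 * S.ϖ ^ n; a 1 0 * (S.ϖ ^ n)⁻¹, a 1 1] := by
  have hp : S.ϖ ^ n ≠ 0 := pow_ne_zero _ S.ϖ_ne_zero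
  rw [S.ηmat_pow, S.ηinv_pow, Matrix.eta_fin_two a, Matrix.mul_fin_two, Matrix.mul_fin_two]
  ext i j
  fin_cases i <;> fin_cases j <;> simp <;> field_simp

lemma inG_iff (g : Matrix (Fin 2) (Fin 2) E) :
    S.inG g ↔ (S.σ (g 1 0) * g 0 0 + S.σ (g 0 0) * g 1 0 = 0 ∧
      S.σ (g 1 0) * g 0 1 + S.σ (g 0 0) * g 1 1 = 1 ∧
      S.σ (g 1 1) * g 0 0 + S.σ (g 0 1) * g 1 0 = 1 ∧
      S.σ (g 1 1) * g 0 1 + S.σ (g 0 1) * g 1 1 = 0) := by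
  simp only [inG, wmat, mbar, ← Matrix.ext_iff, Fin.forall_fin_two, Matrix.mul_apply,
    Fin.sum_univ_two, Matrix.transpose_apply, Matrix.of_apply, Matrix.cons_val',
    Matrix.cons_val_zero, Matrix.cons_val_one, Matrix.empty_val', Matrix.cons_val_fin_one]
  constructor
  · rintro ⟨⟨h00, h01⟩, h10, h11⟩
    exact ⟨by linear_combination h00, by linear_combination h01,
      by linear_combination h10, by linear_combination h11⟩
  · rintro ⟨h00, h01, h10, h11⟩
    exact ⟨⟨by linear_combination h00, by linear_combination h01⟩,
      by linear_combination h10, by linear_combination h11⟩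

lemma inG_ηinv_pow_mul_mul_ηmat_pow {a : Matrix (Fin 2) (Fin 2) E} (ha : S.inG a) (n : ℕ) :
    S.inG (S.ηinv ^ n * a * S.ηmat ^ n) := by
  have hp : S.ϖ ^ n ≠ 0 := pow_ne_zero _ S.ϖ_ne_zero
  obtain ⟨e00, e01, e10, e11⟩ := (S.inG_iff a).mp ha
  rw [S.ηinv_pow_mul_mul_ηmat_pow, S.inG_iff]
  simp only [Matrix.of_apply, Matrix.cons_val', Matrix.cons_val_zero, Matrix.cons_val_one,
    Matrix.empty_val', Matrix.cons_val_fin_one, map_mul, map_inv₀, S.σ_ϖ_pow]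
  refine ⟨?_, ?_, ?_, ?_⟩
  · linear_combination (S.ϖ ^ n)⁻¹ * e00
  · field_simp
    linear_combination e01
  · field_simp
    linear_combination e10
  · linear_combination S.ϖ ^ n * e11

lemma ηinv_pow_mul_mul_ηmat_pow_mem_Kfil {a : Matrix (Fin 2) (Fin 2) E} {m : ℤ} (hm : 0 ≤ m)
    (n : ℕ) (ha : a ∈ S.Kfil (n + m)) : S.ηinv ^ n * a * S.ηmat ^ n ∈ S.Kfil m := by
  obtain ⟨⟨haG, haO⟩, haP⟩ := ha
  have h01 : S.inpE m (a 0 1 * S.ϖ ^ n) :=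
    S.inpE_mono (by omega) (S.inpE_mul_ϖ_pow (m := n + m) n (by simpa using haP 0 1))
  have h10 : S.inpE m (a 1 0 * (S.ϖ ^ n)⁻¹) :=
    S.inpE_mono (by omega) (S.inpE_mul_inv_ϖ_pow (m := n + m) n (by simpa using haP 1 0))
  refine ⟨⟨S.inG_ηinv_pow_mul_mul_ηmat_pow haG n, ?_⟩, ?_⟩ <;>
    rw [S.ηinv_pow_mul_mul_ηmat_pow] <;> intro i j <;> fin_cases i <;> fin_cases j
  · exact haO 0 0
  · exact S.inOE_of_inpE hm h01
  · exact S.inOE_of_inpE hm h10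
  · exact haO 1 1
  · simpa using S.inpE_mono (by omega) (haP 0 0)
  · simpa using h01
  · simpa using h10
  · simpa using S.inpE_mono (by omega) (haP 1 1)

lemma lowerUnipotent_mem_Kfil {x : E} {m : ℤ} (hm : 0 ≤ m) (hσx : S.σ x = -x)
    (hx : S.inpE m x) : !![1, 0; x, 1] ∈ S.Kfil m := by
  refine ⟨⟨?_, ?_⟩, ?_⟩
  · rw [S.inG_iff]
    simp [hσx]
  · intro i j
    fin_cases i <;> fin_cases j
    · exact Or.inr S.ν_one.ge
    · exact Or.inl rfl
    · exact S.inOE_of_inpE hm hx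
    · exact Or.inr S.ν_one.ge
  · intro i j
    fin_cases i <;> fin_cases j <;> simp [inpE]
    exact hx

lemma ηinv_pow_mul_lowerUnipotent_mul_ηmat_pow (n : ℕ) (x : E) :
    S.ηinv ^ n * !![1, 0; x * S.ϖ ^ n, 1] * S.ηmat ^ n = !![1, 0; x, 1] := by
  rw [S.ηinv_pow_mul_mul_ηmat_pow]
  simp [pow_ne_zero n S.ϖ_ne_zero]

end Setting

theorem statement18_general {E : Type*} [Field E] (S : Setting E) (d : ℕ)
    (V : Type*) [AddCommGroup V] [Module ℂ V]
    (ρ : Matrix (Fin 2) (Fin 2) E → (V ≃ₗ[ℂ] V))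
    (hρ_ker : ∀ k ∈ S.Kfil 1, ρ k = 1) :
    -- (i) `K_{d+1} ⊆ ker (ρ^{η^d})`
    (∀ a ∈ S.Kfil (d + 1 : ℕ), ρ (S.ηinv ^ d * a * S.ηmat ^ d) = 1) ∧
    -- (ii) if `ρ([[1,0],[c,1]]) ≠ id` for some `c ∈ √ε·O_F^×`, then `K_d ⊄ ker (ρ^{η^d})`
    ((∃ c : E, (∃ f : E, S.σ f = f ∧ f ≠ 0 ∧ S.ν f = 0 ∧ c = S.sqε * f) ∧
        ρ !![1, 0; c, 1] ≠ 1) →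
      ∃ a ∈ S.Kfil d, ρ (S.ηinv ^ d * a * S.ηmat ^ d) ≠ 1) := by
  refine ⟨fun a ha ↦ hρ_ker _ (S.ηinv_pow_mul_mul_ηmat_pow_mem_Kfil zero_le_one d
    (by simpa using ha)), ?_⟩
  rintro ⟨_, ⟨f, hσf, hf0, hνf, rfl⟩, hρc⟩
  have hc : S.inOE (S.sqε * f) :=
    Or.inr (by rw [S.ν_mul S.sqε_ne_zero hf0, S.ν_sqε, hνf, add_zero])
  have hσc : S.σ (S.sqε * f * S.ϖ ^ d) = -(S.sqε * f * S.ϖ ^ d) := by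
    rw [map_mul, map_mul, S.sqε_conj, hσf, S.σ_ϖ_pow, neg_mul, neg_mul]
  refine ⟨_, S.lowerUnipotent_mem_Kfil d.cast_nonneg hσc
    (by simpa using S.inpE_mul_ϖ_pow d hc), ?_⟩
  rwa [S.ηinv_pow_mul_lowerUnipotent_mul_ηmat_pow]

/-- Let `d > 0`, let `V` be a nonzero complex vector space and let `ρ` be
a representation of `K` on `V` (modelled as a function on matrices that is multiplicative
on `K` and sends `1` to `1`) with `K₁ ⊆ ker ρ`.  Define `ρ^{η^d}` on
`B·K_d = K ∩ η^dKη^{−d}` by `ρ^{η^d}(a) = ρ(η^{−d}·a·η^{d})`.  Then: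
(i) `K_{d+1} ⊆ ker(ρ^{η^d})`; and
(ii) if there is `c ∈ √ε·O_F^×` with `ρ([[1,0],[c,1]]) ≠ id`, then
`K_d ⊄ ker(ρ^{η^d})`. -/
theorem statement18 {E : Type*} [Field E] (S : Setting E) (d : ℕ) (hd : 0 < d)
    (V : Type*) [AddCommGroup V] [Module ℂ V] [Nontrivial V]
    (ρ : Matrix (Fin 2) (Fin 2) E → (V ≃ₗ[ℂ] V))
    (hρ_mul : ∀ a ∈ S.Kset, ∀ b ∈ S.Kset, ρ (a * b) = ρ a * ρ b)
    (hρ_one : ρ 1 = 1)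
    (hρ_ker : ∀ k ∈ S.Kfil 1, ρ k = 1) :
    -- (i) `K_{d+1} ⊆ ker (ρ^{η^d})`
    (∀ a ∈ S.Kfil (d + 1 : ℕ), ρ (S.ηinv ^ d * a * S.ηmat ^ d) = 1) ∧
    -- (ii) if `ρ([[1,0],[c,1]]) ≠ id` for some `c ∈ √ε·O_F^×`, then `K_d ⊄ ker (ρ^{η^d})`
    ((∃ c : E, (∃ f : E, S.σ f = f ∧ f ≠ 0 ∧ S.ν f = 0 ∧ c = S.sqε * f) ∧
        ρ !![1, 0; c, 1] ≠ 1) →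
      ∃ a ∈ S.Kfil d, ρ (S.ηinv ^ d * a * S.ηmat ^ d) ≠ 1) :=
  statement18_general S d V ρ hρ_ker
end
end
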